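/- Let D be a deck and k an even integer such that no graph in D contains an even cycle of length at most k. Then there exists a nonzero kernel U such that c^D_{U,2} = c^D_{U,4} = ⋯ = c^D_{U,k} = 0. -/

import Mathlib

open MeasureTheory

/-- A kernel: a bounded measurable symmetric real function (its values on `[0,1]²` are the
relevant ones). -/
structure Kernel : Type where
  toFun : ℝ → ℝ → ℝ
  symm : ∀ x y, toFun x y = toFun y x
  measurable : Measurable (Function.uncurry toFun)
  bounded : ∃ C : ℝ, ∀ x y, |toFun x y| ≤ C

/-- A kernel is nonzero if it is not a.e. zero on `[0,1]²`. -/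
def Kernel.Nonzero (U : Kernel) : Prop :=
  ¬ (∀ᵐ p : ℝ × ℝ ∂(volume.restrict ((Set.Icc (0:ℝ) 1) ×ˢ (Set.Icc (0:ℝ) 1))),
      U.toFun p.1 p.2 = 0)

/-- A kernel is balanced if its marginals vanish a.e. -/
def Kernel.Balanced (U : Kernel) : Prop :=
  ∀ᵐ x ∂(volume.restrict (Set.Icc (0:ℝ) 1)), (∫ y in Set.Icc (0:ℝ) 1, U.toFun x y) = 0

/-- The product of the kernel values over the edges of a graph. -/
noncomputable def edgeProd {V : Type} (H : SimpleGraph V) (U : Kernel) (x : V → ℝ) : ℝ :=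
  ∏ᶠ e ∈ H.edgeSet, Sym2.lift ⟨fun u v => U.toFun (x u) (x v), fun u v => U.symm (x u) (x v)⟩ e

/-- The homomorphism density `t(H, U)` of a finite simple graph in a kernel. -/
noncomputable def homDensity {V : Type} [Fintype V] (H : SimpleGraph V) (U : Kernel) : ℝ :=
  ∫ x in (Set.univ.pi fun _ : V => Set.Icc (0:ℝ) 1), edgeProd H U x

open Classical in
/-- The rooted homomorphism density `t^H_U(z)` of a graph `H` rooted at `w`. -/
noncomputable def rootedDensity {V : Type} [Fintype V] (H : SimpleGraph V) (w : V)
    (U : Kernel) (z : ℝ) : ℝ :=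
  ∫ x in (Set.univ.pi fun _ : {v : V // v ≠ w} => Set.Icc (0:ℝ) 1),
    edgeProd H U (fun v => if h : v = w then z else x ⟨v, h⟩)

/-- A bundled finite simple graph. -/
structure FinGraph : Type 1 where
  V : Type
  fintypeV : Fintype V
  G : SimpleGraph V

attribute [instance] FinGraph.fintypeV

def FinGraph.of {V : Type} [h : Fintype V] (G : SimpleGraph V) : FinGraph := ⟨V, h, G⟩

noncomputable def FinGraph.density (G : FinGraph) (U : Kernel) : ℝ := homDensity G.G U

/-- Number of edges of a bundled finite graph. -/
noncomputable def FinGraph.edges (G : FinGraph) : ℕ := G.G.edgeSet.ncard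

instance finiteSubgraph {V : Type} [Finite V] (G : SimpleGraph V) : Finite G.Subgraph := by
  classical
  exact Finite.of_injective (fun G' => (G'.verts, G'.Adj))
    (fun a b h => SimpleGraph.Subgraph.ext (congrArg Prod.fst h) (congrArg Prod.snd h))

open Classical in
/-- The multiset of all subgraphs of `G` having exactly `l` edges. -/
noncomputable def FinGraph.subs (G : FinGraph) (l : ℕ) : Multiset FinGraph :=
  ((Set.toFinite {G' : G.G.Subgraph | G'.edgeSet.ncard = l}).toFinset.val).map
    fun G' => FinGraph.of G'.coe

/-- `D` is an `l`-deck: a multiset of graphs each with exactly `l` edges. -/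
def IsDeck (D : Multiset FinGraph) (l : ℕ) : Prop := ∀ G ∈ D, G.edges = l

/-- The `l`-deck of a deck `D`: all `l`-edge subgraphs of the graphs of `D`. -/
noncomputable def subDeck (D : Multiset FinGraph) (l : ℕ) : Multiset FinGraph :=
  D.bind fun G => G.subs l

/-- `s_D(H)`: the number of subgraphs isomorphic to `H` of the graphs in `D`. -/
noncomputable def sD (D : Multiset FinGraph) (H : FinGraph) : ℕ :=
  (D.map fun G => Set.ncard {G' : G.G.Subgraph | Nonempty (G'.coe ≃g H.G)}).sum

/-- The coefficient `c^D_{U,l} = Σ_{G ∈ D} Σ_{H' ∈ G[l]} t(H', U)`. -/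
noncomputable def coeff (D : Multiset FinGraph) (U : Kernel) (l : ℕ) : ℝ :=
  ((subDeck D l).map fun H => H.density U).sum

/-- All the coefficients `c^D_{U,2}, c^D_{U,4}, …, c^D_{U,l}` vanish. -/
def AllCoeffZero (D : Multiset FinGraph) (U : Kernel) (l : ℕ) : Prop :=
  ∀ k, Even k → 0 < k → k ≤ l → coeff D U k = 0

/-- Among `c^D_{U,2}, c^D_{U,4}, …, c^D_{U,l}` not all vanish and the first nonzero one
is positive. -/
def FirstNonzeroPos (D : Multiset FinGraph) (U : Kernel) (l : ℕ) : Prop :=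
  ∃ k, Even k ∧ 0 < k ∧ k ≤ l ∧ 0 < coeff D U k ∧
    ∀ j, Even j → 0 < j → j < k → coeff D U j = 0

/-- Among `c^D_{U,2}, c^D_{U,4}, …, c^D_{U,l}` not all vanish and the first nonzero one
is negative. -/
def FirstNonzeroNeg (D : Multiset FinGraph) (U : Kernel) (l : ℕ) : Prop :=
  ∃ k, Even k ∧ 0 < k ∧ k ≤ l ∧ coeff D U k < 0 ∧
    ∀ j, Even j → 0 < j → j < k → coeff D U j = 0

def ClassI (D : Multiset FinGraph) (l : ℕ) : Prop :=
  ∀ U : Kernel, U.Nonzero → FirstNonzeroPos D U l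

def ClassII (D : Multiset FinGraph) (l : ℕ) : Prop :=
  ∃ U : Kernel, FirstNonzeroNeg D U l

def ClassIII (D : Multiset FinGraph) (l : ℕ) : Prop :=
  (∃ U : Kernel, U.Nonzero ∧ AllCoeffZero D U l) ∧
  ∀ U : Kernel, AllCoeffZero D U l ∨ FirstNonzeroPos D U l

/-- The cycle `C_n` as a bundled graph. -/
def cycleF (n : ℕ) : FinGraph := FinGraph.of (SimpleGraph.cycleGraph n)

/-- The path `P_n` with `n` edges as a bundled graph. -/
def pathF (n : ℕ) : FinGraph := FinGraph.of (SimpleGraph.pathGraph (n+1))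

/-- Gluing two graphs by identifying the vertex `v` of `G` with the vertex `w` of `H`. -/
def glue {V W : Type} (G : SimpleGraph V) (H : SimpleGraph W) (v : V) (w : W) :
    SimpleGraph (V ⊕ {x : W // x ≠ w}) where
  Adj a b :=
    Sum.elim (fun a => Sum.elim (fun b => G.Adj a b) (fun b => a = v ∧ H.Adj w b.1) b)
             (fun a => Sum.elim (fun b => b = v ∧ H.Adj w a.1) (fun b => H.Adj a.1 b.1) b) a
  symm := ⟨by
    rintro (a | a) (b | b) h
    · exact G.adj_symm h
    · exact h
    · exact h
    · exact H.adj_symm h⟩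
  loopless := ⟨by
    rintro (a | a) h
    · exact G.irrefl h
    · exact H.irrefl h⟩

/-- Disjoint union of two simple graphs. -/
def disjSum {V W : Type} (G : SimpleGraph V) (H : SimpleGraph W) : SimpleGraph (V ⊕ W) where
  Adj a b :=
    Sum.elim (fun a => Sum.elim (fun b => G.Adj a b) (fun _ => False) b)
             (fun a => Sum.elim (fun _ => False) (fun b => H.Adj a b) b) a
  symm := ⟨by
    rintro (a | a) (b | b) h
    · exact G.adj_symm h
    · exact h.elim
    · exact h.elim
    · exact H.adj_symm h⟩
  loopless := ⟨by
    rintro (a | a) h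
    · exact G.irrefl h
    · exact H.irrefl h⟩

/-- Disjoint union `G ∪ H` of bundled graphs. -/
noncomputable def FinGraph.disjU (G H : FinGraph) : FinGraph := FinGraph.of (disjSum G.G H.G)

open Classical in
/-- `C_k ⊕ P_n ⊕ C_l`: two cycles joined by a path with `n` edges; for `n = 0` this is
`C_k ⊕ C_l`, two cycles sharing one vertex. (Junk value if `k = 0` or `l = 0`.) -/
noncomputable def cpcF (k n l : ℕ) : FinGraph :=
  if h : 0 < k ∧ 0 < l then
    let A := glue (SimpleGraph.cycleGraph k) (SimpleGraph.pathGraph (n+1)) ⟨0, h.1⟩ 0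
    let ep : Fin k ⊕ {x : Fin (n+1) // x ≠ 0} :=
      if hn : n = 0 then Sum.inl ⟨0, h.1⟩
      else Sum.inr ⟨Fin.last n, fun hc => hn (by simpa using congrArg Fin.val hc)⟩
    FinGraph.of (glue A (SimpleGraph.cycleGraph l) ep ⟨0, h.2⟩)
  else FinGraph.of (⊥ : SimpleGraph (Fin 0))

/-!
Take `U(x, y) = a(x) b(y) + b(x) a(y)`, where `a` and `b` are mean-zero Haar functions supported
on `[0, 1/2)` and `[1/2, 1)`. Since `U` vanishes when `x` and `y` lie in the same half,
`t(H, U) = 0` unless `H` is bipartite; since `U` has zero marginals, integrating out a vertex of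
degree one also gives `t(H, U) = 0`. So if `t(H, U) ≠ 0` and `H` has an edge, `H` is bipartite
without leaves, and extending a longest path produces a cycle in `H`, necessarily even and of
length at most `‖H‖`. Every `H` counted in `c^D_{U,ℓ'}` is a subgraph of a graph in `D`, which
has no such cycle for `ℓ' ≤ k`.
-/

open MeasureTheory Function SimpleGraph

namespace SimpleGraph

variable {V : Type*} {G : SimpleGraph V}

theorem not_isAcyclic_of_forall_exists_adj_ne [Finite V] (hG : G.edgeSet.Nonempty)
    (h : ∀ v w, G.Adj v w → ∃ w', w' ≠ w ∧ G.Adj v w') : ¬ G.IsAcyclic := by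
  intro hac
  obtain ⟨e, he⟩ := hG
  induction e using Sym2.ind with | _ a b
  have hab : G.Adj a b := he
  have : Nonempty V := ⟨a⟩
  obtain ⟨u, v, p, hp, hmax⟩ := Walk.exists_isPath_forall_isPath_length_le_length G
  have hp_len : 0 < p.length := hmax _ _ (Walk.cons hab .nil) (by simp [hab.ne])
  obtain ⟨w, hw, hvw⟩ := h v p.penultimate (Walk.adj_penultimate
    (Walk.not_nil_iff_lt_length.mpr hp_len)).symm
  -- in an acyclic graph the only neighbour of `v` on `p` is `p.penultimate`; any other extends `p`
  by_cases hsupp : w ∈ p.support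
  · exact hw (hac.eq_penultimate_of_adj_end hp hvw hsupp)
  · have := hmax _ _ _ (hp.concat hsupp hvw)
    simp at this

theorem exists_even_cycleGraph_isContained [Finite V] (hG : G.edgeSet.Nonempty)
    (hcol : G.Colorable 2) (h : ∀ v w, G.Adj v w → ∃ w', w' ≠ w ∧ G.Adj v w') :
    ∃ n, Even n ∧ 4 ≤ n ∧ n ≤ G.edgeSet.ncard ∧ cycleGraph n ⊑ G := by
  classical
  have : Fintype V := Fintype.ofFinite V
  obtain ⟨v, p, hp⟩ : ∃ v, ∃ p : G.Walk v v, p.IsCycle := by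
    simpa [IsAcyclic] using not_isAcyclic_of_forall_exists_adj_ne hG h
  have heven : Even p.length :=
    ((recolorOfEquiv G finTwoEquiv hcol.some).even_length_iff_congr p).mpr Iff.rfl
  have h3 := hp.three_le_length
  refine ⟨p.length, heven, ?_, ?_,
    (cycleGraph_isContained_iff (by omega)).mpr ⟨v, p, hp, rfl⟩⟩
  · obtain ⟨r, hr⟩ := heven
    omega
  · rw [Set.ncard_eq_toFinset_card']
    exact hp.isTrail.length_le_card_edgeFinset

theorem Subgraph.ncard_edgeSet_coe (G' : G.Subgraph) : G'.coe.edgeSet.ncard = G'.edgeSet.ncard := by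
  rw [← G'.image_coe_edgeSet_coe,
    Set.ncard_image_of_injective _ (Sym2.map.injective Subtype.val_injective)]

end SimpleGraph

section UpdateCoordinate

variable {ι α : Type*} [Fintype ι] [DecidableEq ι] [MeasurableSpace α] (μ : Measure α)
  [IsProbabilityMeasure μ] (i : ι)

theorem measurePreserving_update :
    MeasurePreserving (fun p : (ι → α) × α => update p.1 i p.2)
      ((Measure.pi fun _ => μ).prod μ) (Measure.pi fun _ => μ) := by
  refine ⟨measurable_update', (Measure.pi_eq fun s hs => ?_).symm⟩
  have hpre : (fun p : (ι → α) × α => update p.1 i p.2) ⁻¹' Set.univ.pi s =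
      Set.univ.pi (update s i Set.univ) ×ˢ s i := by
    ext ⟨x, t⟩
    simp only [Set.mem_preimage, Set.mem_univ_pi, Set.mem_prod]
    rw [forall_update_iff x (p := fun j a => a ∈ s j),
      forall_update_iff s (p := fun j (S : Set α) => x j ∈ S)]
    simp [and_comm]
  rw [Measure.map_apply measurable_update' (MeasurableSet.univ_pi hs), hpre, Measure.prod_prod,
    Measure.pi_pi, ← Finset.mul_prod_erase _ _ (Finset.mem_univ i),
    ← Finset.mul_prod_erase _ _ (Finset.mem_univ i), update_self, measure_univ, one_mul,
    mul_comm]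
  congr 1
  refine Finset.prod_congr rfl fun j hj => ?_
  rw [update_of_ne (Finset.ne_of_mem_erase hj)]

theorem integral_pi_eq_integral_integral_update {F : (ι → α) → ℝ}
    (hF : Integrable F (Measure.pi fun _ => μ)) :
    ∫ x, F x ∂(Measure.pi fun _ => μ) =
      ∫ x, ∫ t, F (update x i t) ∂μ ∂(Measure.pi fun _ => μ) := by
  have hΦ := measurePreserving_update μ i
  calc ∫ x, F x ∂(Measure.pi fun _ => μ)
      = ∫ p, F (update p.1 i p.2) ∂((Measure.pi fun _ => μ).prod μ) := by
        rw [← integral_map measurable_update'.aemeasurable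
          (hΦ.map_eq.symm ▸ hF.aestronglyMeasurable), hΦ.map_eq]
    _ = _ := integral_prod _ ((hΦ.integrable_comp hF.aestronglyMeasurable).mpr hF)

end UpdateCoordinate

def Kernel.edgeWeight (U : Kernel) {V : Type} (x : V → ℝ) : Sym2 V → ℝ :=
  Sym2.lift ⟨fun u v => U.toFun (x u) (x v), fun u v => U.symm (x u) (x v)⟩

section EdgeProd

variable {V : Type} {H : SimpleGraph V} {U : Kernel}

theorem edgeProd_eq_prod [Fintype V] [Fintype H.edgeSet] (x : V → ℝ) :
    edgeProd H U x = ∏ e ∈ H.edgeFinset, U.edgeWeight x e := by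
  rw [edgeProd, ← finprod_mem_coe_finset, coe_edgeFinset]
  rfl

theorem measurable_edgeProd [Fintype V] : Measurable (edgeProd H U) := by
  classical
  rw [show edgeProd H U = fun x => ∏ e ∈ H.edgeFinset, U.edgeWeight x e from
    funext edgeProd_eq_prod]
  refine Finset.measurable_prod _ fun e _ => ?_
  induction e using Sym2.ind with | _ u v
  show Measurable fun x : V → ℝ => uncurry U.toFun (x u, x v)
  exact U.measurable.comp ((measurable_pi_apply u).prodMk (measurable_pi_apply v))

theorem integrable_edgeProd [Fintype V] (μ : Measure (V → ℝ)) [IsFiniteMeasure μ] :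
    Integrable (edgeProd H U) μ := by
  classical
  obtain ⟨C, hC⟩ := U.bounded
  refine Integrable.of_bound measurable_edgeProd.aestronglyMeasurable (C ^ H.edgeFinset.card)
    (ae_of_all _ fun x => ?_)
  rw [edgeProd_eq_prod, Real.norm_eq_abs, Finset.abs_prod, ← Finset.prod_const]
  refine Finset.prod_le_prod (fun _ _ => abs_nonneg _) fun e _ => ?_
  induction e using Sym2.ind with | _ u v
  exact hC _ _

theorem edgeProd_eq_zero_of_adj [Fintype V] {x : V → ℝ} {u v : V} (huv : H.Adj u v)
    (hU : U.toFun (x u) (x v) = 0) : edgeProd H U x = 0 := by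
  classical
  rw [edgeProd_eq_prod]
  exact Finset.prod_eq_zero (i := s(u, v)) (H.mem_edgeFinset.mpr huv) hU

theorem edgeProd_eq_mul_deleteEdges [Finite V] (x : V → ℝ) {u v : V} (huv : H.Adj u v) :
    edgeProd H U x = U.toFun (x u) (x v) * edgeProd (H.deleteEdges {s(u, v)}) U x := by
  have hins : H.edgeSet = insert s(u, v) (H.deleteEdges {s(u, v)}).edgeSet := by
    rw [edgeSet_deleteEdges, Set.insert_sdiff_singleton,
      Set.insert_eq_of_mem (H.mem_edgeSet.mpr huv)]
  rw [edgeProd, edgeProd, hins, finprod_mem_insert _ (by simp) (Set.toFinite _)]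
  rfl

theorem edgeProd_update_of_forall_not_adj [DecidableEq V] (x : V → ℝ) {v : V}
    (hv : ∀ w, ¬ H.Adj v w) (t : ℝ) : edgeProd H U (update x v t) = edgeProd H U x := by
  refine finprod_mem_congr rfl fun e he => ?_
  induction e using Sym2.ind with | _ a b
  have hav : a ≠ v := by rintro rfl; exact hv b he
  have hbv : b ≠ v := by rintro rfl; exact hv a (H.adj_symm he)
  simp [update_of_ne hav, update_of_ne hbv]

end EdgeProd

section HomDensity

variable {V : Type} [Fintype V] {H : SimpleGraph V} {U : Kernel}

theorem homDensity_eq_zero_of_not_colorable (s : ℝ → Bool)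
    (hs : ∀ x y, s x = s y → U.toFun x y = 0) (hH : ¬ H.Colorable 2) : homDensity H U = 0 := by
  have hzero : ∀ x, edgeProd H U x = 0 := by
    intro x
    by_contra hx
    refine hH ?_
    simpa using (Coloring.mk (fun v => s (x v)) fun huv heq =>
      hx (edgeProd_eq_zero_of_adj huv (hs _ _ heq))).colorable
  simp [homDensity, hzero]

theorem homDensity_eq_zero_of_leaf (hU : ∀ y, ∫ x in Set.Icc (0:ℝ) 1, U.toFun x y = 0)
    {v w : V} (hv : ∀ u, H.Adj v u ↔ u = w) : homDensity H U = 0 := by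
  classical
  let μ := volume.restrict (Set.Icc (0:ℝ) 1)
  have : IsProbabilityMeasure μ := ⟨by simp [μ]⟩
  have hvw : H.Adj v w := (hv w).mpr rfl
  have hisol : ∀ u, ¬ (H.deleteEdges {s(v, w)}).Adj v u := by
    intro u hu
    rw [deleteEdges_adj, (hv u).mp hu.1] at hu
    exact hu.2 rfl
  rw [homDensity, volume_pi, Measure.restrict_pi_pi,
    integral_pi_eq_integral_integral_update μ v (integrable_edgeProd _)]
  refine integral_eq_zero_of_ae (ae_of_all _ fun x => ?_)
  simp only [edgeProd_eq_mul_deleteEdges _ hvw, edgeProd_update_of_forall_not_adj _ hisol,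
    update_self, update_of_ne hvw.ne', integral_mul_const, μ, hU, zero_mul, Pi.zero_apply]

theorem exists_even_cycleGraph_isContained_of_homDensity_ne_zero (s : ℝ → Bool)
    (hs : ∀ x y, s x = s y → U.toFun x y = 0)
    (hU : ∀ y, ∫ x in Set.Icc (0:ℝ) 1, U.toFun x y = 0) (hH : H.edgeSet.Nonempty)
    (ht : homDensity H U ≠ 0) :
    ∃ n, Even n ∧ 4 ≤ n ∧ n ≤ H.edgeSet.ncard ∧ cycleGraph n ⊑ H := by
  refine H.exists_even_cycleGraph_isContained hH ?_ fun v w hvw => ?_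
  · by_contra hcol
    exact ht (homDensity_eq_zero_of_not_colorable s hs hcol)
  · by_contra! hleaf
    exact ht (homDensity_eq_zero_of_leaf hU fun u =>
      ⟨fun hu => by_contra fun huw => hleaf u huw hu, fun huw => huw ▸ hvw⟩)

end HomDensity

noncomputable def haar (c d : ℝ) : ℝ → ℝ :=
  (Set.Ico c ((c + d) / 2)).indicator 1 - (Set.Ico ((c + d) / 2) d).indicator 1

section Haar

variable {c d : ℝ}

@[fun_prop]
theorem measurable_haar : Measurable (haar c d) :=
  (measurable_const.indicator measurableSet_Ico).sub (measurable_const.indicator measurableSet_Ico)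

theorem abs_haar_le_one (x : ℝ) : |haar c d x| ≤ 1 := by
  simp only [haar, Pi.sub_apply, Set.indicator_apply, Set.mem_Ico, Pi.one_apply]
  split_ifs <;> norm_num

theorem haar_eq_one {x : ℝ} (hx : x ∈ Set.Ico c ((c + d) / 2)) : haar c d x = 1 := by
  have : x ∉ Set.Ico ((c + d) / 2) d := fun h => (not_le.mpr hx.2) h.1
  simp [haar, hx, this]

theorem haar_eq_zero {x : ℝ} (hx : x ∉ Set.Ico c d) : haar c d x = 0 := by
  have h₁ : x ∉ Set.Ico c ((c + d) / 2) := fun h => hx ⟨h.1, by linarith [h.1, h.2]⟩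
  have h₂ : x ∉ Set.Ico ((c + d) / 2) d := fun h => hx ⟨by linarith [h.1, h.2], h.2⟩
  simp [haar, h₁, h₂]

theorem integrable_haar (μ : Measure ℝ) [IsFiniteMeasure μ] : Integrable (haar c d) μ :=
  Integrable.of_bound measurable_haar.aestronglyMeasurable 1 (ae_of_all _ abs_haar_le_one)

theorem integral_haar (hcd : c ≤ d) : ∫ x, haar c d x = 0 := by
  have hint : ∀ a b : ℝ, Integrable ((Set.Ico a b).indicator (1 : ℝ → ℝ)) :=
    fun a b => (integrable_indicator_iff measurableSet_Ico).mpr (integrableOn_const (by simp))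
  simp only [haar, Pi.sub_apply]
  rw [integral_sub (hint _ _) (hint _ _), integral_indicator_one measurableSet_Ico,
    integral_indicator_one measurableSet_Ico, measureReal_def, measureReal_def, Real.volume_Ico,
    Real.volume_Ico, ENNReal.toReal_ofReal (by linarith), ENNReal.toReal_ofReal (by linarith)]
  ring

theorem setIntegral_Icc_haar (hc : 0 ≤ c) (hcd : c ≤ d) (hd : d ≤ 1) :
    ∫ x in Set.Icc (0:ℝ) 1, haar c d x = 0 := by
  rw [setIntegral_eq_integral_of_forall_compl_eq_zero fun x hx => haar_eq_zero fun h' =>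
    hx (show x ∈ Set.Icc (0:ℝ) 1 from ⟨hc.trans h'.1, h'.2.le.trans hd⟩), integral_haar hcd]

end Haar

noncomputable def haarKernel : Kernel where
  toFun x y := haar 0 (1/2) x * haar (1/2) 1 y + haar (1/2) 1 x * haar 0 (1/2) y
  symm x y := by ring
  measurable := by unfold Function.uncurry; fun_prop
  bounded := ⟨2, fun x y => by
    refine (abs_add_le _ _).trans ?_
    rw [abs_mul, abs_mul, ← one_add_one_eq_two]
    exact add_le_add (mul_le_one₀ (abs_haar_le_one x) (abs_nonneg _) (abs_haar_le_one y))
      (mul_le_one₀ (abs_haar_le_one x) (abs_nonneg _) (abs_haar_le_one y))⟩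

theorem haarKernel_apply (x y : ℝ) : haarKernel.toFun x y =
    haar 0 (1/2) x * haar (1/2) 1 y + haar (1/2) 1 x * haar 0 (1/2) y :=
  rfl

theorem haarKernel_eq_zero {x y : ℝ} (h : decide (x < 1/2) = decide (y < 1/2)) :
    haarKernel.toFun x y = 0 := by
  have h₀ : ∀ z : ℝ, z < 1/2 → haar (1/2) 1 z = 0 := fun z hz => haar_eq_zero fun h' => by
    linarith [h'.1]
  have h₁ : ∀ z : ℝ, ¬ z < 1/2 → haar 0 (1/2) z = 0 := fun z hz =>
    haar_eq_zero fun h' => hz h'.2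
  rw [haarKernel_apply]
  by_cases hx : x < 1/2
  · rw [h₀ x hx, h₀ y ((decide_eq_decide.mp h).mp hx)]
    ring
  · rw [h₁ x hx, h₁ y (mt (decide_eq_decide.mp h).mpr hx)]
    ring

theorem setIntegral_Icc_haarKernel (y : ℝ) :
    ∫ x in Set.Icc (0:ℝ) 1, haarKernel.toFun x y = 0 := by
  simp only [haarKernel_apply]
  have : IsFiniteMeasure (volume.restrict (Set.Icc (0:ℝ) 1)) := ⟨by simp⟩
  rw [integral_add ((integrable_haar _).mul_const _) ((integrable_haar _).mul_const _),
    integral_mul_const, integral_mul_const, setIntegral_Icc_haar le_rfl (by norm_num) (by norm_num),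
    setIntegral_Icc_haar (by norm_num) (by norm_num) le_rfl]
  ring

theorem haarKernel_nonzero : haarKernel.Nonzero := by
  intro h
  let T := Set.Ico (0:ℝ) (1/4) ×ˢ Set.Ico (1/2:ℝ) (3/4)
  have hT : MeasurableSet T := measurableSet_Ico.prod measurableSet_Ico
  have hTsub : T ⊆ Set.Icc (0:ℝ) 1 ×ˢ Set.Icc (0:ℝ) 1 := fun p hp =>
    ⟨⟨hp.1.1, by linarith [hp.1.2]⟩, ⟨by linarith [hp.2.1], by linarith [hp.2.2]⟩⟩
  have hone : ∀ p ∈ T, haarKernel.toFun p.1 p.2 = 1 := by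
    rintro ⟨x, y⟩ ⟨hx, hy⟩
    rw [haarKernel_apply, haar_eq_one (by norm_num at hx ⊢; exact hx),
      haar_eq_one (by norm_num at hy ⊢; exact hy), haar_eq_zero fun h' => by linarith [h'.1, hx.2]]
    ring
  have hfalse : ∀ᵐ p ∂(volume.restrict T), False := by
    filter_upwards [ae_restrict_of_ae_restrict_of_subset hTsub h, ae_restrict_mem hT]
      with p hp hpT
    exact one_ne_zero ((hone p hpT).symm.trans hp)
  have hvol : volume T = 0 :=
    Measure.restrict_eq_zero.mp (ae_eq_bot.mp (Filter.eventually_false_iff_eq_bot.mp hfalse))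
  norm_num [T, Measure.volume_eq_prod, Measure.prod_prod] at hvol

open Classical in
theorem coeff_eq_zero_of_forall_subgraph {D : Multiset FinGraph} {U : Kernel} {l : ℕ}
    (h : ∀ G ∈ D, ∀ G' : G.G.Subgraph, G'.edgeSet.ncard = l → homDensity G'.coe U = 0) :
    coeff D U l = 0 := by
  refine Multiset.sum_eq_zero fun r hr => ?_
  obtain ⟨H, hH, rfl⟩ := Multiset.mem_map.mp hr
  obtain ⟨G, hG, hHG⟩ := Multiset.mem_bind.mp hH
  obtain ⟨G', hG', rfl⟩ := Multiset.mem_map.mp hHG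
  exact h G hG G' (by simpa using hG')

theorem not_isContained_of_sD_eq_zero {D : Multiset FinGraph} {H : FinGraph} (h : sD D H = 0)
    {G : FinGraph} (hG : G ∈ D) : ¬ H.G ⊑ G.G := by
  intro hHG
  obtain ⟨G', ⟨e⟩⟩ := hHG.exists_iso_subgraph
  have hempty := Multiset.sum_eq_zero_iff.mp h _ (Multiset.mem_map_of_mem _ hG)
  rw [Set.ncard_eq_zero (Set.toFinite _)] at hempty
  exact (Set.eq_empty_iff_forall_notMem.mp hempty) G' ⟨e.symm⟩

theorem core_III_general (D : Multiset FinGraph) (k : ℕ)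
    (hno : ∀ j : ℕ, Even j → 4 ≤ j → j ≤ k → sD D (cycleF j) = 0) :
    ∃ U : Kernel, U.Nonzero ∧ AllCoeffZero D U k := by
  classical
  refine ⟨haarKernel, haarKernel_nonzero, fun j _ hj hjk =>
    coeff_eq_zero_of_forall_subgraph fun G hG G' hG' => ?_⟩
  by_contra ht
  have hne : G'.coe.edgeSet.Nonempty :=
    Set.nonempty_of_ncard_ne_zero (by rw [G'.ncard_edgeSet_coe]; omega)
  obtain ⟨n, hn, h4, hnj, hcyc⟩ := exists_even_cycleGraph_isContained_of_homDensity_ne_zero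
    (fun x => decide (x < 1/2)) (fun _ _ => haarKernel_eq_zero) setIntegral_Icc_haarKernel hne ht
  rw [G'.ncard_edgeSet_coe, hG'] at hnj
  exact not_isContained_of_sD_eq_zero (hno n hn h4 (hnj.trans hjk)) hG
    (hcyc.trans G'.coe_isContained)

/-- If `D` is a deck and `k` an even integer such that no graph in `D` contains
an even cycle of length at most `k`, then there is a nonzero kernel `U` with
`c^D_{U,2} = c^D_{U,4} = ⋯ = c^D_{U,k} = 0`. -/
theorem core_III (l : ℕ) (D : Multiset FinGraph) (hD : IsDeck D l) (k : ℕ) (hk : Even k)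
    (hno : ∀ j : ℕ, Even j → 4 ≤ j → j ≤ k → sD D (cycleF j) = 0) :
    ∃ U : Kernel, U.Nonzero ∧ AllCoeffZero D U k :=
  core_III_general D k hno
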